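/- Let G be a graph, T a tree, f : G → T a graph homomorphism, n ≥ 1 an integer, and η a multi-homomorphism from G to T such that d_T(f(z), y) ≤ 2n for every z ∈ V(G) and every y ∈ η(z). Let (x,x′) ∈ E(G) be an edge with u_η(x) = u_η(x′) = 2n. Then exactly one of the following two conditions holds: (1) η(x) is a singleton {y}, and for every y′ ∈ η(x′) with d_T(f(x′), y′) = 2n the unique path in T from f(x′) to y′ contains y; (2) η(x′) is a singleton {y′}, and for every y ∈ η(x) with d_T(f(x), y) = 2n the unique path in T from f(x) to y contains y′. -/

import Mathlib

structure Graph' where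
  V : Type
  E : V → V → Prop
  symm : ∀ {x y}, E x y → E y x

def IsGraphHom (G H : Graph') (f : G.V → H.V) : Prop :=
  ∀ {x y}, G.E x y → H.E (f x) (f y)

structure Walk (G : Graph') (a b : G.V) where
  len : ℕ
  toFun : ℕ → G.V
  start_eq : toFun 0 = a
  end_eq : toFun len = b
  adj : ∀ i, i < len → G.E (toFun i) (toFun (i + 1))

structure MultiHom (G H : Graph') where
  toFun : G.V → Set H.V
  nonempty : ∀ x, (toFun x).Nonempty
  edge : ∀ {x y}, G.E x y → ∀ a ∈ toFun x, ∀ b ∈ toFun y, H.E a b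

def MultiHom.le {G H : Graph'} (η η' : MultiHom G H) : Prop :=
  ∀ x, η.toFun x ⊆ η'.toFun x

def SameComponent {G H : Graph'} (η η' : MultiHom G H) : Prop :=
  Relation.ReflTransGen (fun a b => MultiHom.le a b ∨ MultiHom.le b a) η η'

def ofHom {G H : Graph'} (f : G.V → H.V) (hf : IsGraphHom G H f) : MultiHom G H where
  toFun x := {f x}
  nonempty x := ⟨f x, rfl⟩
  edge := by
    intro x y hxy a ha b hb
    rw [Set.mem_singleton_iff] at ha hb
    subst ha; subst hb
    exact hf hxy

def prodI (G : Graph') (n : ℕ) : Graph' where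
  V := G.V × Fin (n + 1)
  E := fun p q => G.E p.1 q.1 ∧ p.2.val ≤ q.2.val + 1 ∧ q.2.val ≤ p.2.val + 1
  symm := by
    rintro p q ⟨h1, h2, h3⟩
    exact ⟨G.symm h1, h3, h2⟩

def MoveA {G : Graph'} {a b : G.V} (γ δ : Walk G a b) : Prop :=
  δ.len = γ.len + 2 ∧ ∃ k ≤ γ.len,
    (∀ i ≤ k, δ.toFun i = γ.toFun i) ∧
    (∀ i, k ≤ i → i ≤ γ.len → δ.toFun (i + 2) = γ.toFun i)

def MoveB {G : Graph'} {a b : G.V} (γ δ : Walk G a b) : Prop :=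
  γ.len = δ.len ∧ ∃ j, ∀ i ≤ γ.len, i ≠ j → γ.toFun i = δ.toFun i

def Eqv1 {G : Graph'} {a b : G.V} : Walk G a b → Walk G a b → Prop :=
  Relation.EqvGen MoveA

def Eqv2 {G : Graph'} {a b : G.V} : Walk G a b → Walk G a b → Prop :=
  Relation.EqvGen (fun γ δ => MoveA γ δ ∨ MoveB γ δ)

noncomputable def Graph'.dist (G : Graph') (a b : G.V) : ℕ :=
  sInf {n | ∃ γ : Walk G a b, γ.len = n}

def Graph'.Connected (G : Graph') : Prop := ∀ a b : G.V, Nonempty (Walk G a b)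

def Graph'.Bipartite (G : Graph') : Prop :=
  ∃ c : G.V → ZMod 2, ∀ {x y}, G.E x y → c x ≠ c y

def constWalk {G : Graph'} (a : G.V) : Walk G a a :=
  ⟨0, fun _ => a, rfl, rfl, fun i hi => absurd hi (by omega)⟩

def Walk.concat {G : Graph'} {a b c : G.V} (γ : Walk G a b) (δ : Walk G b c) :
    Walk G a c where
  len := γ.len + δ.len
  toFun i := if i ≤ γ.len then γ.toFun i else δ.toFun (i - γ.len)
  start_eq := by simp [γ.start_eq]
  end_eq := by
    by_cases h : δ.len = 0
    · have hbc : b = c := by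
        have h1 := δ.end_eq
        rw [h, δ.start_eq] at h1
        exact h1
      simp [h, γ.end_eq, hbc]
    · have h1 : ¬ (γ.len + δ.len ≤ γ.len) := by omega
      (try dsimp only)
      rw [if_neg h1]
      have h2 : γ.len + δ.len - γ.len = δ.len := by omega
      rw [h2, δ.end_eq]
  adj := by
    intro i hi
    (try dsimp only)
    rcases lt_trichotomy i γ.len with h | h | h
    · rw [if_pos (by omega : i ≤ γ.len), if_pos (by omega : i + 1 ≤ γ.len)]
      exact γ.adj i h
    · have hδ : 0 < δ.len := by omega
      rw [if_pos (by omega : i ≤ γ.len), if_neg (by omega : ¬ i + 1 ≤ γ.len)]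
      have h2 : i + 1 - γ.len = 1 := by omega
      rw [h2, h, γ.end_eq]
      have h3 := δ.adj 0 hδ
      rw [δ.start_eq] at h3
      exact h3
    · rw [if_neg (by omega : ¬ i ≤ γ.len), if_neg (by omega : ¬ i + 1 ≤ γ.len)]
      have h2 : i + 1 - γ.len = (i - γ.len) + 1 := by omega
      rw [h2]
      exact δ.adj (i - γ.len) (by omega)

def Walk.reverse {G : Graph'} {a b : G.V} (γ : Walk G a b) : Walk G b a where
  len := γ.len
  toFun i := γ.toFun (γ.len - i)
  start_eq := by simp [γ.end_eq]
  end_eq := by simp [γ.start_eq]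
  adj := by
    intro i hi
    have h1 : γ.len - i = (γ.len - (i + 1)) + 1 := by omega
    have h2 := γ.adj (γ.len - (i + 1)) (by omega)
    rw [← h1] at h2
    exact G.symm h2

def Walk.map {G H : Graph'} (f : G.V → H.V) (hf : IsGraphHom G H f) {a b : G.V}
    (γ : Walk G a b) : Walk H (f a) (f b) where
  len := γ.len
  toFun i := f (γ.toFun i)
  start_eq := by (try dsimp only); rw [γ.start_eq]
  end_eq := by (try dsimp only); rw [γ.end_eq]
  adj := fun i hi => hf (γ.adj i hi)

def Walk.pow {G : Graph'} {a : G.V} (γ : Walk G a a) : ℕ → Walk G a a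
  | 0 => constWalk a
  | n + 1 => (Walk.pow γ n).concat γ

def Walk.zpow {G : Graph'} {a : G.V} (γ : Walk G a a) : ℤ → Walk G a a
  | Int.ofNat n => γ.pow n
  | Int.negSucc n => γ.reverse.pow (n + 1)
def finClip (n t : ℕ) : Fin (n + 1) := ⟨min t n, by omega⟩

def realizedWalk {G H : Graph'} {n : ℕ} (h : (prodI G n).V → H.V)
    (hh : IsGraphHom (prodI G n) H h) {v v' : G.V} (hvv' : G.E v v')
    {w : H.V} (h0 : h (v, finClip n 0) = w) (hN : h (v, finClip n n) = w) :
    Walk H w w where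
  len := 2 * n
  toFun i := if i % 2 = 0 then h (v, finClip n (i / 2)) else h (v', finClip n (i / 2))
  start_eq := by
    (try dsimp only)
    rw [if_pos (by norm_num : (0:ℕ) % 2 = 0), Nat.zero_div]
    exact h0
  end_eq := by
    (try dsimp only)
    rw [if_pos (by omega : (2 * n) % 2 = 0)]
    have h2 : 2 * n / 2 = n := by omega
    rw [h2]
    exact hN
  adj := by
    intro i hi
    (try dsimp only)
    rcases Nat.even_or_odd i with he | ho
    · obtain ⟨t, ht⟩ := he
      rw [if_pos (by omega : i % 2 = 0), if_neg (by omega : ¬ (i + 1) % 2 = 0)]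
      have h4 : (i + 1) / 2 = i / 2 := by omega
      rw [h4]
      refine hh ⟨hvv', ?_, ?_⟩ <;> ((try dsimp only); omega)
    · obtain ⟨t, ht⟩ := ho
      rw [if_neg (by omega : ¬ i % 2 = 0), if_pos (by omega : (i + 1) % 2 = 0)]
      refine hh ⟨G.symm hvv', ?_, ?_⟩ <;> (dsimp only [finClip]; omega)

def Realizable {G H : Graph'} (f : G.V → H.V) (v : G.V) (ω : Walk H (f v) (f v)) : Prop :=
  ∃ (n : ℕ) (h : (prodI G n).V → H.V) (hh : IsGraphHom (prodI G n) H h)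
    (hs : ∀ x, h (x, finClip n 0) = f x) (he : ∀ x, h (x, finClip n n) = f x)
    (v' : G.V) (_ : G.E v v'),
    Eqv2 ω (realizedWalk h hh ‹G.E v v'› (hs v) (he v))
def SquareFree (G : Graph') : Prop :=
  (∀ x, ¬ G.E x x) ∧
  ¬ ∃ a b c d : G.V, a ≠ b ∧ a ≠ c ∧ a ≠ d ∧ b ≠ c ∧ b ≠ d ∧ c ≠ d ∧
    G.E a b ∧ G.E b c ∧ G.E c d ∧ G.E d a

def nbhd (G : Graph') (v : G.V) : Set G.V := {y | G.E v y}

def nbhd2 (G : Graph') (v : G.V) : Set G.V := {z | ∃ y, G.E v y ∧ G.E y z}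

def IsGraphCovering (G H : Graph') (p : G.V → H.V) : Prop :=
  IsGraphHom G H p ∧ ∀ v : G.V, Set.BijOn p (nbhd G v) (nbhd H (p v))

def Is2CoveringMap (G H : Graph') (p : G.V → H.V) : Prop :=
  IsGraphHom G H p ∧ ∀ v : G.V,
    Set.BijOn p (nbhd G v) (nbhd H (p v)) ∧ Set.BijOn p (nbhd2 G v) (nbhd2 H (p v))

def pushforward {G H1 H2 : Graph'} (p : H1.V → H2.V) (hp : IsGraphHom H1 H2 p)
    (η : MultiHom G H1) : MultiHom G H2 where
  toFun x := p '' η.toFun x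
  nonempty x := (η.nonempty x).image p
  edge := by
    rintro x y hxy a ⟨a', ha', rfl⟩ b ⟨b', hb', rfl⟩
    exact hp (η.edge hxy a' ha' b' hb')

def IsCycleWalk {G : Graph'} {a : G.V} (γ : Walk G a a) : Prop :=
  3 ≤ γ.len ∧ ∀ i j, i < γ.len → j < γ.len → γ.toFun i = γ.toFun j → i = j

def IsTree (T : Graph') : Prop :=
  (∀ x, ¬ T.E x x) ∧ (∀ a b : T.V, Nonempty (Walk T a b)) ∧
    ∀ (a : T.V) (γ : Walk T a a), ¬ IsCycleWalk γ

def IsPath {G : Graph'} {a b : G.V} (γ : Walk G a b) : Prop :=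
  ∀ i j, i ≤ γ.len → j ≤ γ.len → γ.toFun i = γ.toFun j → i = j

def OnWalk {G : Graph'} {a b : G.V} (γ : Walk G a b) (y : G.V) : Prop :=
  ∃ i ≤ γ.len, γ.toFun i = y

def CrossHomotopic (G H : Graph') (f g : G.V → H.V) : Prop :=
  ∃ (n : ℕ) (h : (prodI G n).V → H.V), IsGraphHom (prodI G n) H h ∧
    (∀ x, h (x, finClip n 0) = f x) ∧ (∀ x, h (x, finClip n n) = g x)

def quotGraph (G : Graph') (Γ : Type) [Group Γ] [MulAction Γ G.V] : Graph' where
  V := Quotient (MulAction.orbitRel Γ G.V)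
  E := fun α β => ∃ x y : G.V, Quotient.mk (MulAction.orbitRel Γ G.V) x = α ∧
        Quotient.mk (MulAction.orbitRel Γ G.V) y = β ∧ G.E x y
  symm := by
    rintro α β ⟨x, y, hx, hy, hxy⟩
    exact ⟨y, x, hy, hx, G.symm hxy⟩

/-!
Put `p = f x`, `p' = f x'`, `A = η x`, `B = η x'`, so that every vertex of `A` is adjacent to every
vertex of `B`. The edge `p p'` of the tree splits its vertices into those closer to `p` and those
closer to `p'`, and it is the only edge between the two sides. Pick `y ∈ A`, `y' ∈ B` at distance
`2n` from `p`, resp. `p'`. As `y ~ y'` and `2n ≥ 2`, exactly one of them lies on the side of its own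
centre, say `y`, so `d(p', y) = 2n + 1`. Every `b ∈ B` is then a neighbour of `y` at distance `2n`
from `p'`, i.e. the neighbour of `y` on the path to `p'`; hence `B = {b₀}` with `d(p, b₀) = 2n - 1`,
and `b₀` is the neighbour on the path to `p` of every point of `A` at distance `2n` from `p`: this is
(2). And (1) fails because `y` is too far from `p'` to lie on the path from `p'` to `b₀`.
-/
namespace SimpleGraph

variable {V : Type*} {G : SimpleGraph V}

lemma Walk.dist_le_of_mem_support {u v w : V} (p : G.Walk u v) (h : w ∈ p.support) :
    G.dist u w ≤ p.length := by
  classical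
  exact (G.dist_le _).trans (p.length_takeUntil_le_length h)

def PathsThrough (G : SimpleGraph V) (c : V) (r : ℕ) (A : Set V) (b : V) : Prop :=
  ∀ a ∈ A, G.dist c a = r → ∀ P : G.Walk c a, P.IsPath → b ∈ P.support

namespace IsTree

lemma mem_support_of_adj_of_dist_eq_add_one (hG : G.IsTree) {r u w : V} (hadj : G.Adj u w)
    (hd : G.dist r w = G.dist r u + 1) {P : G.Walk r w} (hP : P.IsPath) : u ∈ P.support := by
  obtain ⟨q, hq, hql⟩ := (hG.connected r u).exists_path_of_dist
  refine hG.isAcyclic.mem_support_of_ne_mem_support_of_adj_of_isPath hP hq hadj.symm fun hw => ?_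
  have := q.dist_le_of_mem_support hw
  omega

lemma eq_of_adj_of_dist_eq_add_one (hG : G.IsTree) {r v z w : V} (hz : G.Adj z v)
    (hw : G.Adj w v) (hdz : G.dist r v = G.dist r z + 1) (hdw : G.dist r v = G.dist r w + 1) :
    z = w := by
  obtain ⟨P, hP, -⟩ := (hG.connected r v).exists_path_of_dist
  rw [hG.isAcyclic.eq_penultimate_of_adj_end hP hz.symm
      (hG.mem_support_of_adj_of_dist_eq_add_one hz hdz hP),
    hG.isAcyclic.eq_penultimate_of_adj_end hP hw.symm
      (hG.mem_support_of_adj_of_dist_eq_add_one hw hdw hP)]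

/-- If `c` is the vertex before `b` on a geodesic from `p'`, then seen from `p` both `a` and `c`
are parents of `b`, so `c = a`, which puts `a` too close to `p'`. -/
lemma eq_of_adj_crossing (hG : G.IsTree) {p p' a b : V} (hpp' : G.Adj p p')
    (hab : G.Adj a b) (ha : G.dist p' a = G.dist p a + 1) (hb : G.dist p b = G.dist p' b + 1) :
    a = p := by
  by_cases h0 : G.dist p a = 0
  · exact ((hG.connected p a).dist_eq_zero_iff.mp h0).symm
  exfalso
  have hpb := hG.dist_eq_dist_add_one_of_adj p hab
  have hp'b := hG.dist_eq_dist_add_one_of_adj p' hab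
  obtain ⟨Q, -, hQ⟩ := (hG.connected p' b).exists_path_of_dist
  have hQnil : ¬ Q.Nil := by rw [Walk.not_nil_iff_lt_length]; omega
  have hcb : G.Adj Q.penultimate b := Q.adj_penultimate hQnil
  have hc' : G.dist p' Q.penultimate ≤ G.dist p a - 1 :=
    (G.dist_le Q.dropLast).trans (by rw [Q.length_dropLast]; omega)
  have hc : G.dist p b = G.dist p Q.penultimate + 1 := by
    have := hG.connected.dist_triangle (u := p) (v := p') (w := Q.penultimate)
    have := hG.dist_eq_dist_add_one_of_adj p hcb
    have := dist_eq_one_iff_adj.mpr hpp'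
    omega
  have hca := hG.eq_of_adj_of_dist_eq_add_one hcb hab hc (by omega)
  rw [hca] at hc'
  omega

lemma dist_eq_of_adj_of_far (hG : G.IsTree) {p p' y b : V} {r : ℕ} (hr : 1 ≤ r)
    (hpp' : G.Adj p p') (hyb : G.Adj y b) (hy : G.dist p y = r) (hy' : G.dist p' y = r + 1)
    (hb : G.dist p' b ≤ r) : G.dist p' b = r ∧ G.dist p y = G.dist p b + 1 := by
  have hp'b := hG.dist_eq_dist_add_one_of_adj p' hyb
  have hpb := hG.dist_eq_dist_add_one_of_adj p hyb
  have hp'b' : G.dist p' b = r := by omega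
  refine ⟨hp'b', ?_⟩
  rcases hpb with hpb | hpb
  · exact hpb
  · have := hG.eq_of_adj_crossing hpp' hyb (by omega) (by omega)
    subst this
    rw [dist_self] at hy
    omega

lemma pathsThrough_of_far (hG : G.IsTree) {p p' y : V} {A B : Set V} {r : ℕ} (hr : 1 ≤ r)
    (hpp' : G.Adj p p') (hAB : ∀ a ∈ A, ∀ b ∈ B, G.Adj a b) (hB : B.Nonempty)
    (hBr : ∀ b ∈ B, G.dist p' b ≤ r) (hyA : y ∈ A) (hy : G.dist p y = r)
    (hy' : G.dist p' y = r + 1) :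
    (∃ b₀, B = {b₀} ∧ G.PathsThrough p r A b₀) ∧ ¬ ∃ a₀, A = {a₀} ∧ G.PathsThrough p' r B a₀ := by
  have hdist b (hb : b ∈ B) :=
    hG.dist_eq_of_adj_of_far hr hpp' (hAB y hyA b hb) hy hy' (hBr b hb)
  obtain ⟨b₀, hb₀⟩ := hB
  have hB : B = {b₀} := Set.eq_singleton_iff_unique_mem.mpr ⟨hb₀, fun b hb =>
    hG.eq_of_adj_of_dist_eq_add_one (hAB y hyA b hb).symm (hAB y hyA b₀ hb₀).symm
      (by rw [(hdist b hb).1, hy']) (by rw [(hdist b₀ hb₀).1, hy'])⟩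
  refine ⟨⟨b₀, hB, fun a ha hda P hP => hG.mem_support_of_adj_of_dist_eq_add_one
    (hAB a ha b₀ hb₀).symm (by rw [hda, ← hy, (hdist b₀ hb₀).2]) hP⟩, ?_⟩
  rintro ⟨a₀, rfl, hthrough⟩
  obtain ⟨Q, hQ, hQl⟩ := (hG.connected p' b₀).exists_path_of_dist
  have := Q.dist_le_of_mem_support (hthrough b₀ hb₀ (hdist b₀ hb₀).1 Q hQ)
  rw [← Set.mem_singleton_iff.mp hyA] at this
  have := (hdist b₀ hb₀).1
  omega

theorem pathsThrough_or_and_not_and (hG : G.IsTree) {p p' : V} {A B : Set V} {r : ℕ}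
    (hr : 2 ≤ r) (hpp' : G.Adj p p') (hAB : ∀ a ∈ A, ∀ b ∈ B, G.Adj a b)
    (hAr : ∀ a ∈ A, G.dist p a ≤ r) (hBr : ∀ b ∈ B, G.dist p' b ≤ r)
    (hy : ∃ y ∈ A, G.dist p y = r) (hy' : ∃ y' ∈ B, G.dist p' y' = r) :
    let C1 := ∃ a₀, A = {a₀} ∧ G.PathsThrough p' r B a₀
    let C2 := ∃ b₀, B = {b₀} ∧ G.PathsThrough p r A b₀
    (C1 ∨ C2) ∧ ¬ (C1 ∧ C2) := by
  intro C1 C2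
  obtain ⟨y, hyA, hy⟩ := hy
  obtain ⟨y', hyB, hy'⟩ := hy'
  have hyp := hG.dist_eq_dist_add_one_of_adj y hpp'
  have hy'p := hG.dist_eq_dist_add_one_of_adj y' hpp'
  rw [dist_comm (u := y), dist_comm (u := y)] at hyp
  rw [dist_comm (u := y'), dist_comm (u := y')] at hy'p
  by_cases hfar : G.dist p' y = r + 1
  · obtain ⟨hC2, hnC1⟩ := hG.pathsThrough_of_far (by omega) hpp' hAB ⟨y', hyB⟩ hBr hyA hy hfar
    exact ⟨.inr hC2, fun h => hnC1 h.1⟩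
  by_cases hfar' : G.dist p y' = r + 1
  · obtain ⟨hC1, hnC2⟩ := hG.pathsThrough_of_far (by omega) hpp'.symm
      (fun b hb a ha => (hAB a ha b hb).symm) ⟨y, hyA⟩ hAr hyB hy' hfar'
    exact ⟨.inl hC1, fun h => hnC2 h.2⟩
  have := hG.eq_of_adj_crossing hpp' (hAB y hyA y' hyB).symm (by omega) (by omega)
  subst this
  rw [dist_comm, dist_eq_one_iff_adj.mpr hpp'] at hy'
  omega

end IsTree
end SimpleGraph

def Graph'.toSimpleGraph (T : Graph') (hloop : ∀ x, ¬ T.E x x) : SimpleGraph T.V where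
  Adj := T.E
  symm := ⟨fun _ _ => T.symm⟩
  loopless := ⟨hloop⟩

namespace Walk

variable {T : Graph'} {a b : T.V}

def toSimpleGraph (hloop : ∀ x, ¬ T.E x x) (γ : Walk T a b) :
    (T.toSimpleGraph hloop).Walk a b :=
  (SimpleGraph.Walk.ofSupport ((List.range (γ.len + 1)).map γ.toFun) (by simp)
    ((List.isChain_map _).mpr ((List.isChain_range_succ _ _).mpr γ.adj))).copy
    (by simp [γ.start_eq]) (by simp [List.getLast_map, γ.end_eq])

variable {hloop : ∀ x, ¬ T.E x x}

lemma support_toSimpleGraph (γ : Walk T a b) :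
    (γ.toSimpleGraph hloop).support = (List.range (γ.len + 1)).map γ.toFun := by
  simp [toSimpleGraph]

lemma length_toSimpleGraph (γ : Walk T a b) : (γ.toSimpleGraph hloop).length = γ.len := by
  simp [toSimpleGraph]

lemma mem_support_toSimpleGraph {γ : Walk T a b} {w : T.V} :
    w ∈ (γ.toSimpleGraph hloop).support ↔ OnWalk γ w := by
  simp [support_toSimpleGraph, OnWalk]

lemma isPath_toSimpleGraph {γ : Walk T a b} (hγ : IsPath γ) :
    (γ.toSimpleGraph hloop).IsPath := by
  rw [SimpleGraph.Walk.isPath_def, support_toSimpleGraph,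
    List.nodup_map_iff_inj_on List.nodup_range]
  simpa [Nat.lt_succ_iff] using fun i hi j hj => hγ i j hi hj

def ofSimpleGraph (W : (T.toSimpleGraph hloop).Walk a b) : Walk T a b where
  len := W.length
  toFun := W.getVert
  start_eq := W.getVert_zero
  end_eq := W.getVert_length
  adj _ hi := W.adj_getVert_succ hi

lemma onWalk_ofSimpleGraph {W : (T.toSimpleGraph hloop).Walk a b} {w : T.V} :
    OnWalk (ofSimpleGraph W) w ↔ w ∈ W.support := by
  simp [OnWalk, ofSimpleGraph, SimpleGraph.Walk.mem_support_iff_exists_getVert, and_comm]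

lemma isPath_ofSimpleGraph {W : (T.toSimpleGraph hloop).Walk a b} (hW : W.IsPath) :
    IsPath (ofSimpleGraph W) :=
  fun _ _ hi hj h => hW.getVert_injOn hi hj h

end Walk

namespace Graph'

variable {T : Graph'} (hloop : ∀ x, ¬ T.E x x)

lemma dist_eq_toSimpleGraph_dist (a b : T.V) :
    T.dist a b = (T.toSimpleGraph hloop).dist a b := by
  rw [Graph'.dist, SimpleGraph.dist_eq_sInf]
  congr 1
  ext n
  exact ⟨fun ⟨γ, h⟩ => ⟨γ.toSimpleGraph hloop, by rw [Walk.length_toSimpleGraph, h]⟩,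
    fun ⟨W, h⟩ => ⟨Walk.ofSimpleGraph W, h⟩⟩

lemma forall_isPath_onWalk_iff {u v y : T.V} :
    (∀ P : Walk T u v, IsPath P → OnWalk P y) ↔
      ∀ P : (T.toSimpleGraph hloop).Walk u v, P.IsPath → y ∈ P.support :=
  ⟨fun h _ hP => Walk.onWalk_ofSimpleGraph.mp (h _ (Walk.isPath_ofSimpleGraph hP)),
    fun h _ hP => Walk.mem_support_toSimpleGraph.mp (h _ (Walk.isPath_toSimpleGraph hP))⟩

end Graph'

lemma IsTree.toSimpleGraph_isTree {T : Graph'} (hT : IsTree T) (v : T.V) :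
    (T.toSimpleGraph hT.1).IsTree where
  connected := have : Nonempty T.V := ⟨v⟩; ⟨fun a b => ⟨(hT.2.1 a b).some.toSimpleGraph hT.1⟩⟩
  isAcyclic _ c hc := hT.2.2 _ (Walk.ofSimpleGraph c) ⟨hc.three_le_length,
    fun _ _ hi hj h => hc.getVert_injOn' (Nat.le_sub_one_of_lt hi) (Nat.le_sub_one_of_lt hj) h⟩

theorem statement_5 (G T : Graph') (hT : IsTree T)
    (f : G.V → T.V) (hf : IsGraphHom G T f) (n : ℕ) (hn : 1 ≤ n)
    (η : MultiHom G T)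
    (hbound : ∀ z : G.V, ∀ y ∈ η.toFun z, T.dist (f z) y ≤ 2 * n)
    (x x' : G.V) (hxx' : G.E x x')
    (hux : ∃ y ∈ η.toFun x, T.dist (f x) y = 2 * n)
    (hux' : ∃ y ∈ η.toFun x', T.dist (f x') y = 2 * n) :
    let C1 : Prop := ∃ y : T.V, η.toFun x = {y} ∧
      ∀ y' ∈ η.toFun x', T.dist (f x') y' = 2 * n →
        ∀ P : Walk T (f x') y', IsPath P → OnWalk P y
    let C2 : Prop := ∃ y' : T.V, η.toFun x' = {y'} ∧
      ∀ y ∈ η.toFun x, T.dist (f x) y = 2 * n →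
        ∀ P : Walk T (f x) y, IsPath P → OnWalk P y'
    (C1 ∨ C2) ∧ ¬ (C1 ∧ C2) := by
  simp only [Graph'.dist_eq_toSimpleGraph_dist hT.1, Graph'.forall_isPath_onWalk_iff hT.1]
    at hbound hux hux' ⊢
  exact (hT.toSimpleGraph_isTree (f x)).pathsThrough_or_and_not_and (by omega) (hf hxx')
    (fun a ha b hb => η.edge hxx' a ha b hb) (hbound x) (hbound x') hux hux'
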